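/- In the bugs model with broadcast control, if all distances d_i > 0 then ∑_{i=1}^n ḋ_i ≤ −1/(2n) + n‖U_c‖. In particular, if ‖U_c‖ < 1/(2n²), then ∑_{i=1}^n ḋ_i < 0. -/

import Mathlib

/-!
Write `g i = ‖u (i + 1) - u i‖`. Since the `u i` are unit vectors,
`⟪u i, u (i + 1) - u i⟫ = -g i ^ 2 / 2`, and the control contributes at most `‖U_c‖` per
agent because `|b (i + 1) - b i| ≤ 1`. The closing relation `∑ d i • u i = 0` with `d i > 0`
forces some `u j` to make an obtuse angle with `u 0`, so the closed polygon `u 0, u 1, …` has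
perimeter `∑ g i ≥ ‖u j - u 0‖ ≥ 1`, and Cauchy–Schwarz turns this into `∑ g i ^ 2 ≥ 1 / n`.
-/

open Finset RealInnerProductSpace

section CyclicSums

variable {n : ℕ} [NeZero n]

theorem Fin.sum_sub_succ_eq_zero {M : Type*} [AddCommGroup M] (p : Fin n → M) :
    ∑ i, (p (i + 1) - p i) = 0 := by
  rw [sum_sub_distrib, sub_eq_zero]
  exact Equiv.sum_comp (Equiv.addRight 1) p

open Fin.NatCast in
theorem Fin.dist_zero_le_sum_dist_succ {X : Type*} [PseudoMetricSpace X] (u : Fin n → X)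
    (j : Fin n) : dist (u 0) (u j) ≤ ∑ i, dist (u i) (u (i + 1)) := by
  have hsucc (i : Fin n) : ((i.val + 1 : ℕ) : Fin n) = i + 1 := by
    rw [Nat.cast_add, Nat.cast_one, Fin.cast_val_eq_self]
  calc dist (u 0) (u j) = dist (u ((0 : ℕ) : Fin n)) (u ((j.val : ℕ) : Fin n)) := by
        rw [Nat.cast_zero, Fin.cast_val_eq_self]
    _ ≤ ∑ k ∈ range j, dist (u (k : Fin n)) (u ((k + 1 : ℕ) : Fin n)) :=
        dist_le_range_sum_dist (fun k : ℕ => u k) j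
    _ ≤ ∑ k ∈ range n, dist (u (k : Fin n)) (u ((k + 1 : ℕ) : Fin n)) :=
        sum_le_sum_of_subset_of_nonneg (range_subset_range.2 j.isLt.le)
          fun _ _ _ => dist_nonneg
    _ = ∑ i, dist (u i) (u (i + 1)) := by
        rw [← Fin.sum_univ_eq_sum_range]
        simp only [Fin.cast_val_eq_self, hsucc]

end CyclicSums

theorem inv_card_le_sum_sq {ι : Type*} [Fintype ι] {f : ι → ℝ} (hf : 1 ≤ ∑ i, f i) :
    1 / Fintype.card ι ≤ ∑ i, f i ^ 2 := by
  have hcard : (0 : ℝ) < Fintype.card ι := by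
    have : Nonempty ι := by
      by_contra h
      simp only [not_nonempty_iff.mp h, univ_eq_empty, sum_empty] at hf
      linarith
    exact_mod_cast Fintype.card_pos
  have hcs := sq_sum_le_card_mul_sum_sq (s := univ) (f := f)
  rw [card_univ] at hcs
  rw [div_le_iff₀ hcard]
  nlinarith

section InnerProductSpace

variable {E : Type*} [NormedAddCommGroup E] [InnerProductSpace ℝ E]

theorem exists_inner_nonpos_of_sum_smul_eq_zero {ι : Type*} [Fintype ι] [Nonempty ι]
    {c : ι → ℝ} (hc : ∀ i, 0 < c i) {v : ι → E} (hv : ∑ i, c i • v i = 0) (w : E) :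
    ∃ j, ⟪v j, w⟫ ≤ 0 := by
  by_contra! hpos
  have : 0 < ⟪∑ i, c i • v i, w⟫ := by
    simp only [sum_inner, real_inner_smul_left]
    exact sum_pos (fun i _ => mul_pos (hc i) (hpos i)) univ_nonempty
  simp [hv] at this

theorem one_le_norm_sub_of_inner_nonpos {x y : E} (hx : ‖x‖ = 1) (hy : ‖y‖ = 1)
    (hxy : ⟪x, y⟫ ≤ 0) : 1 ≤ ‖x - y‖ := by
  have h := norm_sub_sq_real x y
  rw [hx, hy] at h
  nlinarith [norm_nonneg (x - y)]

theorem one_le_sum_norm_sub_succ {n : ℕ} [NeZero n] {d : Fin n → ℝ} (hd : ∀ i, 0 < d i)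
    {u : Fin n → E} (hu : ∀ i, ‖u i‖ = 1) (hsum : ∑ i, d i • u i = 0) :
    1 ≤ ∑ i, ‖u (i + 1) - u i‖ := by
  obtain ⟨j, hj⟩ := exists_inner_nonpos_of_sum_smul_eq_zero hd hsum (u 0)
  calc 1 ≤ ‖u j - u 0‖ := one_le_norm_sub_of_inner_nonpos (hu j) (hu 0) hj
    _ = dist (u 0) (u j) := by rw [dist_comm, dist_eq_norm]
    _ ≤ ∑ i, dist (u i) (u (i + 1)) := Fin.dist_zero_le_sum_dist_succ u j
    _ = ∑ i, ‖u (i + 1) - u i‖ := sum_congr rfl fun i _ => by rw [dist_eq_norm, norm_sub_rev]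

theorem real_inner_sub_self_eq_neg_half_norm_sq {x y : E} (hxy : ‖x‖ = ‖y‖) :
    ⟪x, y - x⟫ = -(1 / 2) * ‖y - x‖ ^ 2 := by
  rw [norm_sub_sq_real, inner_sub_right, real_inner_self_eq_norm_sq, real_inner_comm, hxy]
  ring

theorem real_inner_add_smul_sub_add_smul_le {x y U : E} {a b : ℝ} (hxy : ‖x‖ = ‖y‖)
    (hx : ‖x‖ = 1) (hab : |b - a| ≤ 1) :
    ⟪x, (y + b • U) - (x + a • U)⟫ ≤ -(1 / 2) * ‖y - x‖ ^ 2 + ‖U‖ := by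
  have hcontrol : (b - a) * ⟪x, U⟫ ≤ ‖U‖ :=
    calc (b - a) * ⟪x, U⟫ ≤ |b - a| * |⟪x, U⟫| := by rw [← abs_mul]; exact le_abs_self _
      _ ≤ 1 * (‖x‖ * ‖U‖) :=
        mul_le_mul hab (abs_real_inner_le_norm x U) (abs_nonneg _) zero_le_one
      _ = ‖U‖ := by rw [hx, one_mul, one_mul]
  rw [show y + b • U - (x + a • U) = (y - x) + (b - a) • U by module, inner_add_right,
    real_inner_smul_right, real_inner_sub_self_eq_neg_half_norm_sq hxy]
  linarith

end InnerProductSpace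

/-- Bugs model with broadcast control: if all distances are positive then
`∑ ḋ_i ≤ −1/(2n) + n‖U_c‖`; in particular `∑ ḋ_i < 0` whenever `‖U_c‖ < 1/(2n²)`. -/
theorem bugs_sum_distance_derivative_with_control (n : ℕ) [NeZero n]
    (p pdot u : Fin n → EuclideanSpace ℝ (Fin 2))
    (Uc : EuclideanSpace ℝ (Fin 2))
    (b : Fin n → ℝ) (hb : ∀ i, b i = 0 ∨ b i = 1)
    (d : Fin n → ℝ) (hd : ∀ i, d i = ‖p (i + 1) - p i‖)
    (hdpos : ∀ i, 0 < d i)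
    (hu : ∀ i, u i = (d i)⁻¹ • (p (i + 1) - p i))
    (hpdot : ∀ i, pdot i = u i + b i • Uc)
    (ddot : Fin n → ℝ)
    (hddot : ∀ i, ddot i = (inner ℝ (u i) (pdot (i + 1) - pdot i) : ℝ)) :
    (∑ i : Fin n, ddot i ≤ -1 / (2 * n) + n * ‖Uc‖) ∧
    (‖Uc‖ < 1 / (2 * n ^ 2) → ∑ i : Fin n, ddot i < 0) := by
  have hn : (0 : ℝ) < n := Nat.cast_pos.2 (NeZero.pos n)
  have hunit (i : Fin n) : ‖u i‖ = 1 := by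
    rw [hu i, hd i]
    exact norm_smul_inv_norm (norm_pos_iff.1 (hd i ▸ hdpos i))
  have hclosed : ∑ i, d i • u i = 0 := by
    simp only [hu, smul_smul, mul_inv_cancel₀ (hdpos _).ne', one_smul]
    exact Fin.sum_sub_succ_eq_zero p
  have hsq : 1 / (n : ℝ) ≤ ∑ i, ‖u (i + 1) - u i‖ ^ 2 := by
    simpa using inv_card_le_sum_sq (one_le_sum_norm_sub_succ hdpos hunit hclosed)
  have hstep (i : Fin n) : ddot i ≤ -(1 / 2) * ‖u (i + 1) - u i‖ ^ 2 + ‖Uc‖ := by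
    rw [hddot, hpdot, hpdot]
    refine real_inner_add_smul_sub_add_smul_le (by rw [hunit, hunit]) (hunit i) ?_
    rcases hb (i + 1) with h | h <;> rcases hb i with h' | h' <;> norm_num [h, h']
  have hbound : ∑ i, ddot i ≤ -1 / (2 * n) + n * ‖Uc‖ :=
    calc ∑ i, ddot i ≤ ∑ i, (-(1 / 2) * ‖u (i + 1) - u i‖ ^ 2 + ‖Uc‖) :=
          sum_le_sum fun i _ => hstep i
      _ = -(1 / 2) * ∑ i, ‖u (i + 1) - u i‖ ^ 2 + n * ‖Uc‖ := by
        simp [sum_add_distrib, mul_sum]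
      _ ≤ -1 / (2 * n) + n * ‖Uc‖ := by
        have : -1 / (2 * n : ℝ) = -(1 / 2) * (1 / n) := by field_simp
        rw [this]; gcongr ?_ + _; nlinarith
  refine ⟨hbound, fun hUc => ?_⟩
  calc ∑ i, ddot i ≤ -1 / (2 * n) + n * ‖Uc‖ := hbound
    _ < -1 / (2 * n) + n * (1 / (2 * n ^ 2)) := by gcongr
    _ = 0 := by field_simp; ring
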